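/- Let g ≥ 2, p a prime not dividing g, m with gcd(m,p) = 1, k ≥ 1, and let G_p ≤ F_p^* be the subgroup generated by g. If the string (d_1,...,d_k) does not occur in the g-ary expansion of m/p, then with D = d_1 g^{k-1} + ... + d_k, every interval [u, u + H) of residues with ⌈D p / g^k⌉ ≤ u ≤ ⌊(D + 1/2) p / g^k⌋ and H = ⌊p / (2 g^k)⌋ contains no element of the coset m·G_p in F_p. -/
import Mathlib


/-- The `r`-th digit (for `r ≥ 1`) of the `g`-ary expansion of `m / n`. -/
def dig (g m n r : ℕ) : ℕ := m * g ^ r / n % g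

lemma geom_bound (g : ℕ) (hg : 1 ≤ g) (f : ℕ → ℕ) (hf : ∀ j, f j < g) (t : ℕ) :
    (∑ j ∈ Finset.range t, f j * g ^ j) < g ^ t := by
  induction t with
  | zero => simp
  | succ n ih =>
    rw [Finset.sum_range_succ, pow_succ]
    have h1 : f n + 1 ≤ g := hf n
    have h2 : 0 < g ^ n := pow_pos (by omega) n
    nlinarith

lemma digit_extract (g : ℕ) (hg : 1 ≤ g) (f : ℕ → ℕ) (hf : ∀ j, f j < g) (k t : ℕ)
    (ht : t < k) :
    (∑ j ∈ Finset.range k, f j * g ^ j) / g ^ t % g = f t := by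
  have hgt : 0 < g ^ t := pow_pos (by omega) t
  have hsplit : ∀ n, (∑ j ∈ Finset.range (t + (n + 1)), f j * g ^ j)
      = (∑ j ∈ Finset.range t, f j * g ^ j)
        + g ^ t * (f t + g * ∑ i ∈ Finset.range n, f (t + 1 + i) * g ^ i) := by
    intro n
    rw [Finset.sum_range_add, Finset.sum_range_succ']
    congr 1
    have hmain : (∑ i ∈ Finset.range n, f (t + (i + 1)) * g ^ (t + (i + 1)))
        = g ^ t * (g * ∑ i ∈ Finset.range n, f (t + 1 + i) * g ^ i) := by
      rw [Finset.mul_sum, Finset.mul_sum]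
      apply Finset.sum_congr rfl
      intro i _
      rw [show t + (i + 1) = t + (1 + i) by omega, pow_add, pow_add, pow_one]
      ring
    rw [hmain, mul_add, add_zero]
    ring
  have hk2 : k = t + (k - t - 1 + 1) := by omega
  rw [hk2, hsplit (k - t - 1)]
  rw [Nat.add_mul_div_left _ _ hgt,
    Nat.div_eq_of_lt (geom_bound g hg f hf t), Nat.zero_add,
    Nat.add_mul_mod_self_left, Nat.mod_eq_of_lt (hf t)]

lemma dig_shift (g p m j r : ℕ) (hp : 0 < p) (hr : 1 ≤ r) :
    dig g m p (j + r) = dig g (m * g ^ j % p) p r := by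
  obtain ⟨r', rfl⟩ : ∃ r', r = r' + 1 := ⟨r - 1, by omega⟩
  unfold dig
  have h1 : m * g ^ (j + (r' + 1))
      = p * ((m * g ^ j / p) * g ^ (r' + 1)) + (m * g ^ j % p) * g ^ (r' + 1) := by
    have := Nat.div_add_mod (m * g ^ j) p
    calc m * g ^ (j + (r' + 1)) = (m * g ^ j) * g ^ (r' + 1) := by rw [pow_add]; ring
      _ = (p * (m * g ^ j / p) + m * g ^ j % p) * g ^ (r' + 1) := by rw [this]
      _ = p * ((m * g ^ j / p) * g ^ (r' + 1)) + (m * g ^ j % p) * g ^ (r' + 1) := by ring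
  rw [h1, Nat.mul_add_div hp]
  have h2 : m * g ^ j / p * g ^ (r' + 1) = g * (m * g ^ j / p * g ^ r') := by
    rw [pow_succ]; ring
  rw [h2, Nat.mul_add_mod]

/-- If the string `(d₁,…,d_k)` does not occur in the `g`-ary expansion of `m/p`, then
every interval `[u, u+H)` of residues with `⌈Dp/g^k⌉ ≤ u ≤ ⌊(D+1/2)p/g^k⌋` and
`H = ⌊p/(2g^k)⌋` contains no element of the coset `m ⟨g⟩` in `F_p`. -/
theorem interval_avoids_coset (g p m k : ℕ) (hg : 2 ≤ g) (hp : p.Prime)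
    (hpg : ¬ p ∣ g) (hm : 1 ≤ m) (hmp : m < p) (hgcd : Nat.gcd m p = 1)
    (hk : 1 ≤ k) (d : Fin k → ℕ) (hd : ∀ i, d i < g)
    (hmiss : ¬ ∃ r ≥ 1, ∀ i : Fin k, dig g m p (r + i) = d i) :
    ∀ u : ℕ,
      Nat.ceil (((∑ i : Fin k, d i * g ^ (k - 1 - (i : ℕ)) : ℕ) : ℝ) * p / g ^ k) ≤ u →
      (u : ℝ) ≤ (((∑ i : Fin k, d i * g ^ (k - 1 - (i : ℕ)) : ℕ) : ℝ) + 1 / 2) * p / g ^ k →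
      ∀ x : ℕ, x < p / (2 * g ^ k) →
      ∀ j : ℕ, (m : ZMod p) * (g : ZMod p) ^ j ≠ (u : ZMod p) + (x : ZMod p) := by
  intro u hu1 hu2 x hx j heq
  set D : ℕ := ∑ i : Fin k, d i * g ^ (k - 1 - (i : ℕ)) with hDdef
  have hg0 : 0 < g := by omega
  have hgk : 0 < g ^ k := pow_pos hg0 k
  have hp0 : 0 < p := hp.pos
  -- extend d to ℕ
  set dN : ℕ → ℕ := fun i => if h : i < k then d ⟨i, h⟩ else 0 with hdN
  have hdNlt : ∀ i, dN i < g := by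
    intro i; simp only [hdN]; split
    · exact hd _
    · omega
  have hDsum : D = ∑ j ∈ Finset.range k, dN (k - 1 - j) * g ^ j := by
    rw [hDdef]
    have e1 : (∑ i : Fin k, d i * g ^ (k - 1 - (i : ℕ)))
        = ∑ i ∈ Finset.range k, dN i * g ^ (k - 1 - i) := by
      rw [← Fin.sum_univ_eq_sum_range (fun i => dN i * g ^ (k - 1 - i)) k]
      apply Finset.sum_congr rfl
      intro i _
      congr 1
      simp [hdN, i.isLt]
    rw [e1, ← Finset.sum_range_reflect]
    apply Finset.sum_congr rfl
    intro j hj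
    simp only [Finset.mem_range] at hj
    congr 2
    omega
  have hDlt : D < g ^ k := by
    rw [hDsum]
    exact geom_bound g (by omega) _ (fun j => hdNlt _) k
  -- real bounds
  have hgkR : (0:ℝ) < (g:ℝ) ^ k := by positivity
  have hx' : (x + 1) * (2 * g ^ k) ≤ p := by
    calc (x + 1) * (2 * g ^ k) ≤ (p / (2 * g ^ k)) * (2 * g ^ k) :=
          Nat.mul_le_mul_right _ hx
      _ ≤ p := Nat.div_mul_le_self _ _
  have hu1R : (D : ℝ) * p / (g : ℝ) ^ k ≤ u := by
    have := Nat.ceil_le.mp hu1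
    push_cast at this ⊢
    convert this using 2 <;> push_cast <;> ring
  have low : D * p ≤ (u + x) * g ^ k := by
    have h := (div_le_iff₀ hgkR).mp hu1R
    have h2 : (D:ℝ) * p ≤ ((u + x : ℕ) : ℝ) * (g:ℝ) ^ k := by
      push_cast
      nlinarith [Nat.cast_nonneg (α := ℝ) x]
    exact_mod_cast h2
  have high : (u + x) * g ^ k < (D + 1) * p := by
    have h2 : (u:ℝ) * (g:ℝ) ^ k ≤ ((D:ℝ) + 1/2) * p := by
      have hu2' : (u : ℝ) ≤ ((D:ℝ) + 1/2) * p / (g:ℝ) ^ k := by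
        convert hu2 using 2 <;> push_cast <;> ring
      rw [le_div_iff₀ hgkR] at hu2'
      linarith
    have h3 : ((x:ℝ) + 1) * (2 * (g:ℝ) ^ k) ≤ p := by exact_mod_cast hx'
    have h4 : ((u + x : ℕ) : ℝ) * (g:ℝ) ^ k < ((D + 1 : ℕ) : ℝ) * p := by
      push_cast
      nlinarith
    exact_mod_cast h4
  have uxlt : u + x < p := by
    have h5 : (u + x) * g ^ k < g ^ k * p :=
      lt_of_lt_of_le high (Nat.mul_le_mul_right _ (by omega))
    by_contra hcon
    push_neg at hcon
    have : g ^ k * p ≤ (u + x) * g ^ k := by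
      calc g ^ k * p ≤ g ^ k * (u + x) := Nat.mul_le_mul_left _ hcon
        _ = (u + x) * g ^ k := by ring
    omega
  -- the residue t
  set t : ℕ := m * g ^ j % p with htdef
  have htlt : t < p := Nat.mod_lt _ hp0
  have hteq : t = u + x := by
    have hcast : ((t : ℕ) : ZMod p) = ((u + x : ℕ) : ZMod p) := by
      rw [htdef]
      push_cast [ZMod.natCast_mod]
      exact heq
    have hmod := (ZMod.natCast_eq_natCast_iff t (u + x) p).mp hcast
    have h2 : t % p = (u + x) % p := hmod
    rwa [Nat.mod_eq_of_lt htlt, Nat.mod_eq_of_lt uxlt] at h2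
  have hdivD : t * g ^ k / p = D := by
    apply Nat.div_eq_of_lt_le
    · rw [hteq]; exact low
    · rw [hteq]
      calc (u + x) * g ^ k < (D + 1) * p := high
        _ = Nat.succ D * p := by rw [Nat.succ_eq_add_one]
  refine hmiss ⟨j + 1, by omega, fun i => ?_⟩
  have hshift : dig g m p (j + 1 + (i : ℕ)) = dig g t p (1 + (i : ℕ)) := by
    have h := dig_shift g p m j (1 + (i : ℕ)) hp0 (by omega)
    rwa [show j + (1 + (i : ℕ)) = j + 1 + (i : ℕ) by omega] at h
  rw [hshift]
  have hkey : t * g ^ (1 + (i : ℕ)) / p = D / g ^ (k - 1 - (i : ℕ)) := by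
    rw [← hdivD, Nat.div_div_eq_div_mul]
    have hsplitpow : t * g ^ k = (t * g ^ (1 + (i : ℕ))) * g ^ (k - 1 - (i : ℕ)) := by
      rw [mul_assoc, ← pow_add]
      congr 2
      omega
    rw [hsplitpow, Nat.mul_div_mul_right _ _ (pow_pos hg0 _)]
  have hfin : dig g t p (1 + (i : ℕ)) = D / g ^ (k - 1 - (i : ℕ)) % g := by
    unfold dig
    rw [hkey]
  rw [hfin]
  have hext := digit_extract g (by omega) (fun jj => dN (k - 1 - jj))
    (fun jj => hdNlt _) k (k - 1 - (i : ℕ)) (by omega)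
  rw [← hDsum] at hext
  have hext' : D / g ^ (k - 1 - (i : ℕ)) % g = dN (k - 1 - (k - 1 - (i : ℕ))) := hext
  have hii : k - 1 - (k - 1 - (i : ℕ)) = (i : ℕ) := by
    have := i.isLt; omega
  rw [hext', hii]
  simp [hdN, i.isLt]
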